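/- arXiv:1907.00192 — 3 statements merged into one kernel-verified Lean document; each statement's English description precedes it below -/
import Mathlib

section
/- Let φ be a d-dimensional square morphism of size s prolongable on a ∈ A such that φ(b)(0,…,0) = a for every letter b ∈ A. Then the fixed point w = φ^ω(a) is SURD; in fact, the letter a occurs along every direction q with gaps at most s, and for each m ∈ ℕ^d the prefix of size m of w occurs along every direction with gaps at most s^{⌈log_s(max m)⌉+1}. -/
/-- The word along direction `q` with respect to size `t` in the `d`-dimensional word `w`. -/
def dirWord {d : ℕ} {A : Type*} (w : (Fin d → ℕ) → A) (q t : Fin d → ℕ) :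
    ℕ → ({i : Fin d → ℕ // ∀ j, i j < t j} → A) :=
  fun ℓ i => w (fun j => i.1 j + ℓ * q j)

/-- Strongly uniformly recurrent along all directions. -/
def IsSURD {d : ℕ} {A : Type*} (w : (Fin d → ℕ) → A) : Prop :=
  ∀ t : Fin d → ℕ, ∃ b : ℕ, ∀ q : Fin d → ℕ, Finset.univ.gcd q = 1 →
    ∀ m : ℕ, ∃ k : ℕ, m ≤ k ∧ k < m + b ∧
      dirWord w q t k = dirWord w q t 0

/-- In any interval of length `N` starting at `ℓ` there is a multiple of `N`. -/
lemma exists_mult_in (N ℓ : ℕ) (hN : 0 < N) : ∃ c : ℕ, ℓ ≤ N * c ∧ N * c < ℓ + N := by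
  refine ⟨(ℓ + N - 1) / N, ?_, ?_⟩ <;>
  · have h := Nat.div_add_mod (ℓ + N - 1) N
    have h2 := Nat.mod_lt (ℓ + N - 1) hN
    set M := N * ((ℓ + N - 1) / N)
    omega

/-- Key lemma: the fixed point is periodic with period `s^(e+1)` on the box of size `s^e`. -/
lemma key_lemma {d : ℕ} {A : Type*} (s : ℕ) (hs : 2 ≤ s)
    (φ : A → (Fin d → Fin s) → A) (a : A)
    (hall : ∀ b : A, φ b (fun _ => ⟨0, by linarith⟩) = a)
    (w : (Fin d → ℕ) → A)
    (hw0 : w (fun _ => 0) = a)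
    (hfix : ∀ (i : Fin d → ℕ) (r : Fin d → Fin s),
      w (fun j => s * i j + (r j : ℕ)) = φ (w i) r) :
    ∀ e : ℕ, ∀ i v : Fin d → ℕ, (∀ j, i j < s ^ e) →
      w (fun j => i j + s ^ (e + 1) * v j) = w i := by
  intro e
  induction e with
  | zero =>
    intro i v hi
    have hi0 : i = fun _ => 0 := funext fun j => by simpa using hi j
    subst hi0
    rw [hw0]
    have h1 : (fun j => (0:ℕ) + s ^ 1 * v j)
        = (fun j => s * v j + (((fun _ => (⟨0, by linarith⟩ : Fin s)) j : Fin s) : ℕ)) := by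
      funext j; simp [pow_one]
    rw [h1, hfix, hall]
  | succ e ih =>
    intro i v hi
    have hspos : 0 < s := by omega
    set i' : Fin d → ℕ := fun j => i j / s with hi'def
    set r : Fin d → Fin s := fun j => ⟨i j % s, Nat.mod_lt _ hspos⟩ with hrdef
    have hi' : ∀ j, i' j < s ^ e := by
      intro j
      have h1 := hi j
      rw [pow_succ'] at h1
      exact Nat.div_lt_of_lt_mul h1
    have key1 : (fun j => i j + s ^ (e + 1 + 1) * v j)
        = fun j => s * ((fun j => i' j + s ^ (e + 1) * v j) j) + ((r j : ℕ)) := by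
      funext j
      have h1 := Nat.div_add_mod (i j) s
      have h2 : s * (i j / s + s ^ (e + 1) * v j)
          = s * (i j / s) + s ^ (e + 1 + 1) * v j := by ring
      simp only [hi'def, hrdef]
      omega
    have key2 : (fun j => s * i' j + ((r j : ℕ))) = i := by
      funext j
      have h1 := Nat.div_add_mod (i j) s
      simp only [hi'def, hrdef]
      omega
    rw [key1, hfix, ih i' v hi', ← key2, hfix]

theorem stmt_14 {d : ℕ} {A : Type*} (s : ℕ) (hs : 2 ≤ s)
    (φ : A → (Fin d → Fin s) → A) (a : A)
    (hall : ∀ b : A, φ b (fun _ => ⟨0, by omega⟩) = a)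
    (w : (Fin d → ℕ) → A)
    (hw0 : w (fun _ => 0) = a)
    (hfix : ∀ (i : Fin d → ℕ) (r : Fin d → Fin s),
      w (fun j => s * i j + (r j : ℕ)) = φ (w i) r) :
    IsSURD w ∧
    (∀ q : Fin d → ℕ, Finset.univ.gcd q = 1 →
      ∀ ℓ : ℕ, ∃ k : ℕ, ℓ ≤ k ∧ k < ℓ + s ∧ w (fun j => k * q j) = a) ∧
    (∀ m : Fin d → ℕ, ∀ q : Fin d → ℕ, Finset.univ.gcd q = 1 →
      ∀ ℓ : ℕ, ∃ k : ℕ, ℓ ≤ k ∧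
        k < ℓ + s ^ (Nat.clog s (Finset.univ.sup m) + 1) ∧
        ∀ i : Fin d → ℕ, (∀ j, i j < m j) → w (fun j => i j + k * q j) = w i) := by
  have hkey := key_lemma s hs φ a hall w hw0 hfix
  have part3 : ∀ m : Fin d → ℕ, ∀ q : Fin d → ℕ,
      ∀ ℓ : ℕ, ∃ k : ℕ, ℓ ≤ k ∧
        k < ℓ + s ^ (Nat.clog s (Finset.univ.sup m) + 1) ∧
        ∀ i : Fin d → ℕ, (∀ j, i j < m j) → w (fun j => i j + k * q j) = w i := by
    intro m q ℓ
    set e := Nat.clog s (Finset.univ.sup m) with he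
    obtain ⟨c, hc1, hc2⟩ := exists_mult_in (s ^ (e + 1)) ℓ (by positivity)
    refine ⟨s ^ (e + 1) * c, hc1, hc2, fun i hi => ?_⟩
    have hi' : ∀ j, i j < s ^ e := by
      intro j
      calc i j < m j := hi j
        _ ≤ Finset.univ.sup m := Finset.le_sup (Finset.mem_univ j)
        _ ≤ s ^ e := Nat.le_pow_clog (by omega) _
    have harg : (fun j => i j + s ^ (e + 1) * c * q j)
        = fun j => i j + s ^ (e + 1) * ((fun j => c * q j) j) := by
      funext j; ring_nf
    rw [harg, hkey e i (fun j => c * q j) hi']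
  refine ⟨?_, ?_, fun m q _ ℓ => part3 m q ℓ⟩
  · intro t
    refine ⟨s ^ (Nat.clog s (Finset.univ.sup t) + 1), fun q _ m => ?_⟩
    obtain ⟨k, hk1, hk2, hk3⟩ := part3 t q m
    refine ⟨k, hk1, hk2, ?_⟩
    funext i
    simp only [dirWord, zero_mul, add_zero]
    exact hk3 i.1 i.2
  · intro q _ ℓ
    obtain ⟨c, hc1, hc2⟩ := exists_mult_in s ℓ (by omega)
    refine ⟨s * c, hc1, hc2, ?_⟩
    have h1 : (fun j => s * c * q j)
        = (fun j => s * ((fun j => c * q j) j) + (((fun _ => (⟨0, by omega⟩ : Fin s)) j : Fin s) : ℕ)) := by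
      funext j; simp [mul_assoc]
    rw [h1, hfix, hall]
end

section
/- Let w = φ^ω(1) be the fixed point of the bidimensional binary square morphism φ of size 2 given by φ(1) = [[0,0],[1,1]] (i.e., φ(1)_{0,0}=1, φ(1)_{1,0}=1, φ(1)_{0,1}=0, φ(1)_{1,1}=0) and φ(0) with φ(0)_{0,0}=0, φ(0)_{1,0}=0, φ(0)_{0,1}=1 (Case 2 of the paper: φ(0) has bottom row 0,0 and top-left 1; φ(1) has bottom row 1,1 and top-left 0). Then for every odd n ∈ ℕ and every i ∈ {1,…,2^n−1}, w(i, i(2^n−1)2^n) = 0; in particular, the factor 0^{2^n−1} occurs along the direction (1, (2^n−1)2^n), and w is not SURD. -/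
open Fin.CommRing

theorem stmt_17 (φ : Fin 2 → Fin 2 → Fin 2 → Fin 2)
    (h100 : φ 1 0 0 = 1) (h110 : φ 1 1 0 = 1) (h101 : φ 1 0 1 = 0) (h111 : φ 1 1 1 = 0)
    (h000 : φ 0 0 0 = 0) (h010 : φ 0 1 0 = 0) (h001 : φ 0 0 1 = 1)
    (w : ℕ → ℕ → Fin 2) (hw0 : w 0 0 = 1)
    (hfix : ∀ (x y : ℕ) (i j : Fin 2),
      w (2 * x + (i : ℕ)) (2 * y + (j : ℕ)) = φ (w x y) i j) :
    (∀ n : ℕ, Odd n → ∀ i : ℕ, 1 ≤ i → i < 2 ^ n →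
      w i (i * ((2 ^ n - 1) * 2 ^ n)) = 0) ∧
    ¬ IsSURD (fun v : Fin 2 → ℕ => w (v 0) (v 1)) := by
  have fin2 : ∀ a : Fin 2, a = 0 ∨ a = 1 := by decide
  -- the image of any letter has constant bottom row equal to the letter itself
  have L1 : ∀ (x y : ℕ) (i : Fin 2), w (2 * x + (i : ℕ)) (2 * y) = w x y := by
    intro x y i
    have h := hfix x y i 0
    simp only [Fin.val_zero, Nat.add_zero] at h
    rw [h]
    rcases fin2 (w x y) with h' | h' <;> rcases fin2 i with hi | hi <;>
      simp [h', hi, h000, h010, h100, h110]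
  have L3 : ∀ y, w 0 (2 * y) = w 0 y := by
    intro y
    have := L1 0 y 0
    simpa using this
  have L4 : ∀ y, w 0 (2 * y + 1) = w 0 y + 1 := by
    intro y
    have h := hfix 0 y 0 1
    simp only [Fin.val_zero, Fin.val_one, Nat.mul_zero, Nat.add_zero] at h
    rw [h]
    rcases fin2 (w 0 y) with h' | h' <;> simp [h', h001, h101] <;> decide
  -- concatenation of binary expansions
  have concat : ∀ k a b : ℕ, b < 2 ^ k → w 0 (a * 2 ^ k + b) = w 0 a + w 0 b + 1 := by
    intro k
    induction k with
    | zero =>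
        intro a b hb
        interval_cases b
        simp only [pow_zero, mul_one, Nat.add_zero, hw0]
        rcases fin2 (w 0 a) with h' | h' <;> simp [h'] <;> decide
    | succ k ih =>
        intro a b hb
        have hb2 : b / 2 < 2 ^ k := by
          have : 2 ^ (k + 1) = 2 ^ k * 2 := pow_succ 2 k
          omega
        have hsplit : b = 2 * (b / 2) + b % 2 := by omega
        have hp : 2 ^ (k + 1) = 2 ^ k * 2 := pow_succ 2 k
        rcases Nat.even_or_odd b with hbe | hbo
        · have hb0 : b % 2 = 0 := Nat.even_iff.mp hbe
          have e1 : a * 2 ^ (k + 1) + b = 2 * (a * 2 ^ k + b / 2) := by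
            rw [hp, ← mul_assoc]; omega
          have e2 : b = 2 * (b / 2) := by omega
          rw [e1, L3, ih a (b / 2) hb2]
          conv_rhs => rw [e2, L3]
        · have hb1 : b % 2 = 1 := Nat.odd_iff.mp hbo
          have e1 : a * 2 ^ (k + 1) + b = 2 * (a * 2 ^ k + b / 2) + 1 := by
            rw [hp, ← mul_assoc]; omega
          have e2 : b = 2 * (b / 2) + 1 := by omega
          rw [e1, L4, ih a (b / 2) hb2]
          conv_rhs => rw [e2, L4]
          ring
  -- complement identity
  have compl : ∀ (n i : ℕ), i < 2 ^ n → w 0 i + w 0 (2 ^ n - 1 - i) = (n : Fin 2) := by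
    intro n
    induction n with
    | zero =>
        intro i hi
        interval_cases i
        simp [hw0]
    | succ n ih =>
        intro i hi
        have hp : 2 ^ (n + 1) = 2 ^ n * 2 := pow_succ 2 n
        have hj : i / 2 < 2 ^ n := by omega
        have h1 : (1 : ℕ) ≤ 2 ^ n := Nat.one_le_two_pow
        rcases Nat.even_or_odd i with hie | hio
        · have hi0 : i % 2 = 0 := Nat.even_iff.mp hie
          have e1 : i = 2 * (i / 2) := by omega
          have e2 : 2 ^ (n + 1) - 1 - i = 2 * (2 ^ n - 1 - i / 2) + 1 := by omega
          have wi : w 0 i = w 0 (i / 2) := by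
            conv_lhs => rw [e1, L3]
          rw [wi, e2, L4, ← add_assoc, ih (i / 2) hj]
          push_cast
          ring
        · have hi1 : i % 2 = 1 := Nat.odd_iff.mp hio
          have e1 : i = 2 * (i / 2) + 1 := by omega
          have e2 : 2 ^ (n + 1) - 1 - i = 2 * (2 ^ n - 1 - i / 2) := by omega
          have wi : w 0 i = w 0 (i / 2) + 1 := by
            conv_lhs => rw [e1, L4]
          rw [wi, e2, L3, add_right_comm, ih (i / 2) hj]
          push_cast
          ring
  -- value at column 0 for the key points
  have main0 : ∀ n : ℕ, Odd n → ∀ i : ℕ, 1 ≤ i → i < 2 ^ n → w 0 (i * (2 ^ n - 1)) = 0 := by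
    intro n hn i hi1 hi2
    have h1 : (1 : ℕ) ≤ 2 ^ n := Nat.one_le_two_pow
    have e1 : i * (2 ^ n - 1) = (i - 1) * 2 ^ n + (2 ^ n - i) := by
      zify [h1, hi1, hi2.le]
      ring
    have e2 : 2 ^ n - i = 2 ^ n - 1 - (i - 1) := by omega
    have hb : 2 ^ n - i < 2 ^ n := by omega
    have hlt : i - 1 < 2 ^ n := by omega
    have hcast : ((n : ℕ) : Fin 2) = 1 := by
      have h2 : n % 2 = 1 := Nat.odd_iff.mp hn
      apply Fin.ext
      simp [Fin.val_natCast, h2]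
    rw [e1, concat n (i - 1) (2 ^ n - i) hb, e2, compl n (i - 1) hlt, hcast]
    decide
  -- reduction: stripping k low zero rows
  have red : ∀ (k x y : ℕ), x < 2 ^ k → w x (y * 2 ^ k) = w 0 y := by
    intro k
    induction k with
    | zero =>
        intro x y hx
        interval_cases x
        simp
    | succ k ih =>
        intro x y hx
        have hp : 2 ^ (k + 1) = 2 ^ k * 2 := pow_succ 2 k
        have hx2 : x / 2 < 2 ^ k := by omega
        have hm : x % 2 < 2 := Nat.mod_lt _ (by norm_num)
        have e1 : x = 2 * (x / 2) + ((⟨x % 2, hm⟩ : Fin 2) : ℕ) := by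
          simp only [Fin.val_mk]; omega
        have e2 : y * 2 ^ (k + 1) = 2 * (y * 2 ^ k) := by rw [hp]; ring
        rw [e2]
        conv_lhs => rw [e1]
        rw [L1 (x / 2) (y * 2 ^ k) _, ih (x / 2) y hx2]
  have part1 : ∀ n : ℕ, Odd n → ∀ i : ℕ, 1 ≤ i → i < 2 ^ n →
      w i (i * ((2 ^ n - 1) * 2 ^ n)) = 0 := by
    intro n hn i hi1 hi2
    have e : i * ((2 ^ n - 1) * 2 ^ n) = (i * (2 ^ n - 1)) * 2 ^ n := by ring
    rw [e, red n i (i * (2 ^ n - 1)) hi2, main0 n hn i hi1 hi2]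
  refine ⟨part1, ?_⟩
  intro hS
  obtain ⟨b, hb⟩ := hS (fun _ => 1)
  set n : ℕ := 2 * b + 1 with hn
  set q : Fin 2 → ℕ := ![1, (2 ^ n - 1) * 2 ^ n] with hq
  have hgcd : Finset.univ.gcd q = 1 := by
    have h0 : Finset.univ.gcd q ∣ q 0 := Finset.gcd_dvd (Finset.mem_univ 0)
    have : q 0 = 1 := rfl
    rw [this] at h0
    exact Nat.dvd_one.mp h0
  obtain ⟨k, hk1, hk2, hk3⟩ := hb q hgcd 1
  have hkn : k < 2 ^ n := by
    have h1 : b < 2 ^ b := Nat.lt_two_pow_self (n := b)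
    have h2 : 2 ^ b ≤ 2 ^ n := Nat.pow_le_pow_right (by norm_num) (by omega)
    omega
  have hval := congrFun hk3 ⟨fun _ => 0, fun j => Nat.one_pos⟩
  simp only [dirWord, hq, Matrix.cons_val_zero, Matrix.cons_val_one, Matrix.head_cons,
    Nat.zero_add, Nat.zero_mul, Nat.mul_zero, Nat.mul_one, zero_add, zero_mul, mul_zero,
    mul_one] at hval
  have hodd : Odd n := ⟨b, by omega⟩
  have := part1 n hodd k hk1 hkn
  rw [this, hw0] at hval
  exact absurd hval (by decide)
end

section
/- Let w = φ^ω(1) where φ is the bidimensional binary morphism of size 2 with φ(1)_{0,0}=1, φ(1)_{1,0}=1, φ(1)_{0,1}=1, φ(1)_{1,1}=0, and φ(0)_{0,0}=0 (Case 4 of the paper, with φ(1) = [[1,0],[1,1]] in matrix display). Then for every n ∈ ℕ and every j ∈ {1,…,2^n−1}, w(j(2^n−1), j) = 0. In particular the factor 0^{2^n−1} occurs along the direction (2^n−1, 1) for every n, and w is not SURD. -/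
def IsFixedPoint {α : Type*} (φ : α → Fin 2 → Fin 2 → α) (w : ℕ → ℕ → α) : Prop :=
  ∀ (x y : ℕ) (i j : Fin 2), w (2 * x + (i : ℕ)) (2 * y + (j : ℕ)) = φ (w x y) i j

namespace IsFixedPoint

variable {α : Type*} {φ : α → Fin 2 → Fin 2 → α} {w : ℕ → ℕ → α} {a b : α}

theorem apply_of_eq (hw : IsFixedPoint φ w) {x y : ℕ} (X Y : ℕ) (i j : Fin 2)
    (hx : x = 2 * X + (i : ℕ)) (hy : y = 2 * Y + (j : ℕ)) : w x y = φ (w X Y) i j :=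
  hx ▸ hy ▸ hw X Y i j

theorem row_zero_eq (hw : IsFixedPoint φ w) (h00 : φ a 0 0 = a) (h10 : φ a 1 0 = a)
    (h : w 0 0 = a) (x : ℕ) : w x 0 = a := by
  induction x using Nat.strong_induction_on with
  | _ x ih =>
    obtain ⟨x', rfl | rfl⟩ := Nat.even_or_odd' x
    · rcases x'.eq_zero_or_pos with rfl | hx'
      · exact h
      · rw [hw.apply_of_eq x' 0 0 0 (by omega) (by omega), ih x' (by omega), h00]
    · rw [hw.apply_of_eq x' 0 1 0 (by omega) (by omega), ih x' (by omega), h10]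

theorem antidiag_pow_two_sub_one_eq (hw : IsFixedPoint φ w) (h10 : φ a 1 0 = a)
    (h01 : φ a 0 1 = a) (n : ℕ) {X Y : ℕ} (h : w X Y = a) {c : ℕ} (hc : c < 2 ^ n) :
    w (2 ^ n * X + (2 ^ n - 1 - c)) (2 ^ n * Y + c) = a := by
  induction n generalizing c with
  | zero =>
    obtain rfl : c = 0 := by omega
    simpa using h
  | succ n ih =>
    -- `2 ^ (n + 1) * X` becomes `2 * (2 ^ n * X)`, linear in the atom `2 ^ n * X` for `omega`
    rw [pow_succ', mul_assoc, mul_assoc] at *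
    obtain ⟨c', rfl | rfl⟩ := Nat.even_or_odd' c
    · rw [hw.apply_of_eq (2 ^ n * X + (2 ^ n - 1 - c')) (2 ^ n * Y + c') 1 0 (by omega)
        (by omega), ih (by omega), h10]
    · rw [hw.apply_of_eq (2 ^ n * X + (2 ^ n - 1 - c')) (2 ^ n * Y + c') 0 1 (by omega)
        (by omega), ih (by omega), h01]

theorem antidiag_pow_two_eq (hw : IsFixedPoint φ w) (h10 : φ a 1 0 = a) (h01 : φ a 0 1 = a)
    (h11 : φ a 1 1 = b) (h00 : φ b 0 0 = b) (n : ℕ) {X Y : ℕ} (h : w X Y = a) {j : ℕ}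
    (hj : 1 ≤ j) (hjn : j < 2 ^ n) :
    w (2 ^ n * X + (2 ^ n - j)) (2 ^ n * Y + j) = b := by
  induction n generalizing j with
  | zero => omega
  | succ n ih =>
    rw [pow_succ', mul_assoc, mul_assoc] at *
    obtain ⟨j', rfl | rfl⟩ := Nat.even_or_odd' j
    · rw [hw.apply_of_eq (2 ^ n * X + (2 ^ n - j')) (2 ^ n * Y + j') 0 0 (by omega)
        (by omega), ih (by omega) (by omega), h00]
    · rw [hw.apply_of_eq (2 ^ n * X + (2 ^ n - 1 - j')) (2 ^ n * Y + j') 1 1 (by omega)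
        (by omega), hw.antidiag_pow_two_sub_one_eq h10 h01 n h (by omega), h11]

theorem eq_of_mul_pow_two_sub_one (hw : IsFixedPoint φ w) (hrow : ∀ x, w x 0 = a)
    (h10 : φ a 1 0 = a) (h01 : φ a 0 1 = a) (h11 : φ a 1 1 = b) (h00 : φ b 0 0 = b)
    (n j : ℕ) (hj : 1 ≤ j) (hjn : j < 2 ^ n) : w (j * (2 ^ n - 1)) j = b := by
  have key := hw.antidiag_pow_two_eq h10 h01 h11 h00 n (hrow (j - 1)) hj hjn
  have hx : 2 ^ n * (j - 1) + (2 ^ n - j) = j * (2 ^ n - 1) := by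
    zify [hj, hjn.le, Nat.one_le_two_pow (n := n)]
    ring
  rwa [hx, mul_zero, zero_add] at key

end IsFixedPoint

theorem not_isSURD_of_forall_exists_gap {d : ℕ} {A : Type*} (w : (Fin d → ℕ) → A)
    (h : ∀ b : ℕ, ∃ q : Fin d → ℕ, Finset.univ.gcd q = 1 ∧
      ∀ k, 1 ≤ k → k ≤ b → w (fun i => k * q i) ≠ w 0) :
    ¬ IsSURD w := by
  intro hw
  obtain ⟨b, hb⟩ := hw fun _ => 1
  obtain ⟨q, hq, hgap⟩ := h b
  obtain ⟨k, hk1, hkb, hk⟩ := hb q hq 1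
  refine hgap k hk1 (by omega) ?_
  simpa [dirWord, Pi.zero_def] using congrFun hk ⟨0, by simp⟩

theorem stmt_18 (φ : Fin 2 → Fin 2 → Fin 2 → Fin 2)
    (h100 : φ 1 0 0 = 1) (h110 : φ 1 1 0 = 1) (h101 : φ 1 0 1 = 1) (h111 : φ 1 1 1 = 0)
    (h000 : φ 0 0 0 = 0)
    (w : ℕ → ℕ → Fin 2) (hw0 : w 0 0 = 1)
    (hfix : ∀ (x y : ℕ) (i j : Fin 2),
      w (2 * x + (i : ℕ)) (2 * y + (j : ℕ)) = φ (w x y) i j) :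
    (∀ n : ℕ, ∀ j : ℕ, 1 ≤ j → j < 2 ^ n → w (j * (2 ^ n - 1)) j = 0) ∧
    ¬ IsSURD (fun v : Fin 2 → ℕ => w (v 0) (v 1)) := by
  have hw : IsFixedPoint φ w := hfix
  have hzero := hw.eq_of_mul_pow_two_sub_one (hw.row_zero_eq h100 h110 hw0)
    h110 h101 h111 h000
  refine ⟨hzero, not_isSURD_of_forall_exists_gap _ fun b => ⟨![2 ^ b - 1, 1], ?_, ?_⟩⟩
  · have := Finset.gcd_dvd (f := ![2 ^ b - 1, 1]) (Finset.mem_univ 1)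
    exact Nat.dvd_one.mp (by simpa using this)
  · intro k hk hkb
    have hkn : k < 2 ^ b := hkb.trans_lt b.lt_two_pow_self
    simp [hzero b k hk hkn, hw0]
end
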